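/- arXiv:1308.3506 — 3 statements merged into one kernel-verified Lean document; each statement's English description precedes it below -/
import Mathlib

section
/- If the true behavior σ is an ε-correlated equilibrium under w* ∈ ℝ^d (i.e., Regret_{Φ^swap}(σ|w*) ≤ ε), and a prediction σ̂ satisfies the standard ICE polytope relative to σ with deviation set Φ = Φ^swap (for every f ∈ Φ^swap, r(f,σ̂) lies in the convex hull of {r(g,σ) : g ∈ Φ^swap}), then σ̂ is also an ε-correlated equilibrium under w*: Regret_{Φ^swap}(σ̂|w*) ≤ ε. -/
open scoped BigOperators

/-- Dot product on `ℝ^d`. -/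
def dot {d : ℕ} (x w : Fin d → ℝ) : ℝ := ∑ k, x k * w k

section Game

variable {d : ℕ} {N : Type} [Fintype N] [Nonempty N] [DecidableEq N]
variable {A : N → Type} [∀ i, Fintype (A i)] [∀ i, Nonempty (A i)] [∀ i, DecidableEq (A i)]

/-- The outcome obtained from `a` when player `i` applies deviation `f`. -/
def devOutcome (i : N) (f : A i → A i) (a : ∀ j, A j) : ∀ j, A j :=
  Function.update a i (f (a i))

/-- Expected regret features of deviation `f` of player `i` under joint strategy `σ`. -/
def devFeat (u : ∀ i : N, (∀ j, A j) → Fin d → ℝ) (σ : (∀ j, A j) → ℝ)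
    (i : N) (f : A i → A i) : Fin d → ℝ :=
  ∑ a, σ a • (u i (devOutcome i f a) - u i a)

/-- Swap regret: maximal expected regret over all deviations `f : A i → A i`. -/
noncomputable def swapRegret (u : ∀ i : N, (∀ j, A j) → Fin d → ℝ)
    (σ : (∀ j, A j) → ℝ) (w : Fin d → ℝ) : ℝ :=
  ⨆ p : Σ i : N, (A i → A i), dot (devFeat u σ p.1 p.2) w

/-- If the true behavior `σ` is an `ε`-correlated equilibrium under `w*`, and `σ̂`
satisfies the standard ICE polytope relative to `σ` with `Φ = Φ^swap`, then `σ̂`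
is also an `ε`-correlated equilibrium under `w*`. -/
theorem ICE_swap_preserves_correlated_equilibrium
    (u : ∀ i : N, (∀ j, A j) → Fin d → ℝ) (σ σhat : (∀ j, A j) → ℝ)
    (hσ : ∀ a, 0 ≤ σ a) (hσ1 : ∑ a, σ a = 1)
    (hσhat : ∀ a, 0 ≤ σhat a) (hσhat1 : ∑ a, σhat a = 1)
    (wstar : Fin d → ℝ) (ε : ℝ)
    (heq : swapRegret u σ wstar ≤ ε)
    (hICE : ∀ p : Σ i : N, (A i → A i),
      devFeat u σhat p.1 p.2 ∈
        convexHull ℝ (Set.range fun q : Σ i : N, (A i → A i) => devFeat u σ q.1 q.2)) :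
    swapRegret u σhat wstar ≤ ε := by
  have hlin : IsLinearMap ℝ (fun x : Fin d → ℝ => dot x wstar) := by
    constructor
    · intro x y
      simp [dot, add_mul, Finset.sum_add_distrib]
    · intro c x
      simp [dot, Finset.mul_sum, mul_assoc]
  have hconv : Convex ℝ {x : Fin d → ℝ | dot x wstar ≤ ε} :=
    convex_halfSpace_le hlin ε
  have hbdd : BddAbove (Set.range fun p : Σ i : N, (A i → A i) =>
      dot (devFeat u σ p.1 p.2) wstar) := Set.Finite.bddAbove (Set.finite_range _)
  have hgen : (Set.range fun q : Σ i : N, (A i → A i) => devFeat u σ q.1 q.2) ⊆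
      {x : Fin d → ℝ | dot x wstar ≤ ε} := by
    rintro x ⟨q, rfl⟩
    exact le_trans (le_ciSup hbdd q) heq
  have hhull := convexHull_min hgen hconv
  have : Nonempty ((i : N) × (A i → A i)) := ⟨⟨Classical.arbitrary N, id⟩⟩
  apply ciSup_le
  intro p
  exact hhull (hICE p)

end Game
end

section
/- If the true behavior σ is an ε-correlated equilibrium under w* ∈ ℝ^d (i.e., Regret_{Φ^swap}(σ|w*) ≤ ε), and a prediction σ̂ satisfies the standard ICE polytope relative to σ with deviation set Φ = Φ^int (for every f ∈ Φ^int, r(f,σ̂) lies in the convex hull of {r(g,σ) : g ∈ Φ^int}), then σ̂ is an Aε-correlated equilibrium under w*: Regret_{Φ^swap}(σ̂|w*) ≤ A·ε, where A = max_{i∈N} |A_i|. -/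
open scoped BigOperators

section Game

variable {d : ℕ} {N : Type} [Fintype N] [Nonempty N] [DecidableEq N]
variable {A : N → Type} [∀ i, Fintype (A i)] [∀ i, Nonempty (A i)] [∀ i, DecidableEq (A i)]

/-- The switch deviation `switch^{x→y}_i`. -/
def switchDev (i : N) (x y : A i) : A i → A i := fun z => if z = x then y else z

/-- `A = max_i |A_i|`. -/
def maxActions (N : Type) [Fintype N] (A : N → Type) [∀ i, Fintype (A i)] : ℕ :=
  Finset.univ.sup fun i => Fintype.card (A i)

lemma dot_sum {d : ℕ} {ι : Type*} (s : Finset ι) (v : ι → Fin d → ℝ) (w : Fin d → ℝ) :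
    dot (∑ x ∈ s, v x) w = ∑ x ∈ s, dot (v x) w := by
  simp only [dot, Finset.sum_apply, Finset.sum_mul]
  exact Finset.sum_comm

lemma dot_le_of_mem_hull {d : ℕ} {s : Set (Fin d → ℝ)} {x w : Fin d → ℝ} {c : ℝ}
    (hx : x ∈ convexHull ℝ s) (hs : ∀ y ∈ s, dot y w ≤ c) : dot x w ≤ c := by
  have hlin : IsLinearMap ℝ (fun y : Fin d → ℝ => dot y w) := by
    constructor
    · intro p q; simp [dot, add_mul, Finset.sum_add_distrib]
    · intro r p; simp [dot, Finset.mul_sum, mul_assoc]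
  exact convexHull_min hs (convex_halfSpace_le hlin c) hx

lemma devFeat_decomp (u : ∀ i : N, (∀ j, A j) → Fin d → ℝ) (τ : (∀ j, A j) → ℝ)
    (i : N) (f : A i → A i) :
    devFeat u τ i f = ∑ x : A i, devFeat u τ i (switchDev i x (f x)) := by
  symm
  unfold devFeat
  rw [Finset.sum_comm]
  refine Finset.sum_congr rfl fun a _ => ?_
  rw [Finset.sum_eq_single (a i)]
  · have : devOutcome i (switchDev i (a i) (f (a i))) a = devOutcome i f a := by
      simp [devOutcome, switchDev]
    rw [this]
  · intro x _ hx
    have : devOutcome i (switchDev i x (f x)) a = a := by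
      simp [devOutcome, switchDev, Ne.symm hx, Function.update_eq_self]
    rw [this]; simp
  · simp

/-- If the true behavior `σ` is an `ε`-correlated equilibrium under `w*`, and `σ̂`
satisfies the standard ICE polytope relative to `σ` with `Φ = Φ^int`, then `σ̂`
is an `Aε`-correlated equilibrium under `w*`. -/
theorem ICE_internal_gives_Aε_correlated_equilibrium
    (u : ∀ i : N, (∀ j, A j) → Fin d → ℝ) (σ σhat : (∀ j, A j) → ℝ)
    (hσ : ∀ a, 0 ≤ σ a) (hσ1 : ∑ a, σ a = 1)
    (hσhat : ∀ a, 0 ≤ σhat a) (hσhat1 : ∑ a, σhat a = 1)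
    (wstar : Fin d → ℝ) (ε : ℝ)
    (heq : swapRegret u σ wstar ≤ ε)
    (hICE : ∀ p : Σ i : N, A i × A i,
      devFeat u σhat p.1 (switchDev p.1 p.2.1 p.2.2) ∈
        convexHull ℝ (Set.range fun q : Σ i : N, A i × A i =>
          devFeat u σ q.1 (switchDev q.1 q.2.1 q.2.2))) :
    swapRegret u σhat wstar ≤ (maxActions N A : ℝ) * ε := by
  haveI : Nonempty (Σ i : N, (A i → A i)) := ⟨⟨Classical.arbitrary N, id⟩⟩
  have key : ∀ (τ : (∀ j, A j) → ℝ) (i : N) (g : A i → A i),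
      dot (devFeat u τ i g) wstar ≤ swapRegret u τ wstar := by
    intro τ i g
    exact le_ciSup (Finite.bddAbove_range
      (fun p : Σ i : N, (A i → A i) => dot (devFeat u τ p.1 p.2) wstar)) ⟨i, g⟩
  -- ε is nonnegative, since the identity deviation has zero regret
  have hε : 0 ≤ ε := by
    obtain ⟨i⟩ := ‹Nonempty N›
    have h0 : devFeat u σ i id = 0 := by
      unfold devFeat
      have : ∀ a : ∀ j, A j, devOutcome i (id : A i → A i) a = a := by
        intro a; simp [devOutcome]
      simp [this]
    have hle := key σ i id
    rw [h0] at hle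
    simp [dot] at hle
    linarith
  -- every switch deviation of σ has regret ≤ ε
  have hswitch : ∀ q : Σ i : N, A i × A i,
      dot (devFeat u σ q.1 (switchDev q.1 q.2.1 q.2.2)) wstar ≤ ε := by
    intro q
    exact (key σ q.1 (switchDev q.1 q.2.1 q.2.2)).trans heq
  -- every switch deviation of σhat has regret ≤ ε (via the ICE polytope)
  have hhatswitch : ∀ (i : N) (x y : A i),
      dot (devFeat u σhat i (switchDev i x y)) wstar ≤ ε := by
    intro i x y
    refine dot_le_of_mem_hull (hICE ⟨i, x, y⟩) ?_
    rintro v ⟨q, rfl⟩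
    exact hswitch q
  refine ciSup_le fun p => ?_
  obtain ⟨i, f⟩ := p
  calc dot (devFeat u σhat i f) wstar
      = ∑ x : A i, dot (devFeat u σhat i (switchDev i x (f x))) wstar := by
        rw [devFeat_decomp, dot_sum]
    _ ≤ ∑ _x : A i, ε := Finset.sum_le_sum fun x _ => hhatswitch i x (f x)
    _ = (Fintype.card (A i) : ℝ) * ε := by simp [mul_comm]
    _ ≤ (maxActions N A : ℝ) * ε := by
        apply mul_le_mul_of_nonneg_right _ hε
        exact_mod_cast Finset.le_sup (f := fun i => Fintype.card (A i)) (Finset.mem_univ i)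

end Game
end

section
/- Matching regrets does not imply matching regret features: there exist a finite nonempty outcome set 𝒜, a finite nonempty deviation set Φ with regret features r : Φ → 𝒜 → ℝ^d for some d, and probability distributions σ̂ and σ on 𝒜 such that Regret_Φ(σ̂|w) = Regret_Φ(σ|w) for every w ∈ ℝ^d, yet r(f,σ̂) ≠ r(f,σ) for some deviation f ∈ Φ. (A witness is a one-player game with three actions x, y, y′, utility features giving action x utility 0 and actions y, y′ utility 1, Φ the set of all deviations f : {x,y,y′} → {x,y,y′}, σ the point mass on y and σ̂ the point mass on y′.) -/
open scoped BigOperators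

/-- Expected regret features of deviation `f` under distribution `σ`. -/
def expFeat {d : ℕ} {A Φ : Type} (iA : Fintype A) (r : Φ → A → Fin d → ℝ)
    (σ : A → ℝ) (f : Φ) : Fin d → ℝ := ∑ a, σ a • r f a

/-- `Regret_Φ(σ|w) = max_{f ∈ Φ} ⟨r(f,σ), w⟩`. -/
noncomputable def Regret {d : ℕ} {A Φ : Type} (iA : Fintype A) (iΦ : Fintype Φ)
    (r : Φ → A → Fin d → ℝ) (σ : A → ℝ) (w : Fin d → ℝ) : ℝ :=
  ⨆ f : Φ, dot (expFeat iA r σ f) w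

/-- Matching regrets does not imply matching regret features: there are a finite
nonempty outcome set, a finite nonempty deviation set with regret features, and
two probability distributions whose regrets agree for every utility vector `w`,
yet whose expected regret features differ on some deviation. -/
theorem regret_matching_ne_feature_matching :
    ∃ (d : ℕ) (A Φ : Type) (iA : Fintype A) (iΦ : Fintype Φ)
      (_ : Nonempty A) (_ : Nonempty Φ)
      (r : Φ → A → Fin d → ℝ) (σ σhat : A → ℝ),
      (∀ a, 0 ≤ σ a) ∧ (@Finset.sum A ℝ _ (@Finset.univ A iA) σ = 1) ∧
      (∀ a, 0 ≤ σhat a) ∧ (@Finset.sum A ℝ _ (@Finset.univ A iA) σhat = 1) ∧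
      (∀ w : Fin d → ℝ, Regret iA iΦ r σhat w = Regret iA iΦ r σ w) ∧
      (∃ f : Φ, expFeat iA r σhat f ≠ expFeat iA r σ f) := by
  -- d = 1, A = Fin 2, Φ = Fin 2
  -- r f a = (-1)^(f+a) roughly: r 0 0 = -1, r 0 1 = 1, r 1 0 = 1, r 1 1 = -1
  refine ⟨1, Fin 2, Fin 2, inferInstance, inferInstance, ⟨0⟩, ⟨0⟩,
    fun f a _ => if f = a then (-1 : ℝ) else 1,
    fun a => if a = 0 then 1 else 0,
    fun a => if a = 1 then 1 else 0, ?_, ?_, ?_, ?_, ?_, ?_⟩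
  · intro a; positivity
  · simp [Fin.sum_univ_two]
  · intro a; positivity
  · simp [Fin.sum_univ_two]
  · intro w
    have key : ∀ f : Fin 2,
        dot (expFeat inferInstance (fun f a (_ : Fin 1) => if f = a then (-1 : ℝ) else 1)
          (fun a => if a = 1 then (1:ℝ) else 0) f) w
        = dot (expFeat inferInstance (fun f a (_ : Fin 1) => if f = a then (-1 : ℝ) else 1)
          (fun a => if a = 0 then (1:ℝ) else 0) (f + 1)) w := by
      intro f
      fin_cases f <;> simp [dot, expFeat, Fin.sum_univ_two, Fin.sum_univ_one] <;> norm_num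
    unfold Regret
    simp only [key]
    exact (Equiv.addRight (1 : Fin 2)).iSup_comp
      (g := fun f => dot (expFeat inferInstance
        (fun f a (_ : Fin 1) => if f = a then (-1 : ℝ) else 1)
        (fun a => if a = 0 then (1:ℝ) else 0) f) w)
  · refine ⟨0, ?_⟩
    intro h
    have := congrFun h 0
    simp [expFeat, Fin.sum_univ_two] at this
    norm_num at this
end
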